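/- (Geometric median does not satisfy convex validity.) Let t ≥ 3 be a natural number and consider the weighted sum-of-distances function f : ℝ² → ℝ, f(μ) = (t+1)·‖μ‖₂ + t·‖μ − (1,0)‖₂ + t·‖μ − (0,1)‖₂ (the objective of the geometric median of t+1 points at (0,0), t points at (1,0), and t points at (0,1)). Then every minimizer μ of f satisfies μ ∉ segment[(0,0),(1,0)]; in fact its second coordinate is strictly positive. Hence the geometric median of this configuration does not lie in the convex hull of the points {(0,0),(1,0)}, which could be exactly the set of honest inputs. -/

import Mathlib

/-- The point `(a, b)` of the Euclidean plane. -/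
noncomputable def pt (a b : ℝ) : EuclideanSpace ℝ (Fin 2) := WithLp.toLp 2 ![a, b]

lemma pt_sub (a b c d : ℝ) : pt a b - pt c d = pt (a-c) (b-d) := by
  ext i; fin_cases i <;> simp [pt]

lemma norm_pt (a b : ℝ) : ‖pt a b‖ = Real.sqrt (a^2+b^2) := by
  rw [EuclideanSpace.norm_eq]
  simp [pt, Fin.sum_univ_two, sq_abs]

lemma coord_abs_le_norm (v : EuclideanSpace ℝ (Fin 2)) (i : Fin 2) : |v i| ≤ ‖v‖ := by
  rw [EuclideanSpace.norm_eq]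
  have h1 : |v i| = Real.sqrt (‖v i‖^2) := by
    rw [Real.sqrt_sq_eq_abs]; simp
  have h2 := Finset.single_le_sum (f := fun j => ‖v j‖^2) (fun j _ => sq_nonneg _)
    (Finset.mem_univ i)
  rw [h1]
  exact Real.sqrt_le_sqrt h2

/-- The geometric median does not satisfy convex validity: for `t ≥ 3`, any minimizer
`μ` of `μ ↦ (t+1)·‖μ‖ + t·‖μ - (1,0)‖ + t·‖μ - (0,1)‖` (the geometric-median objective
for `t+1` points at the origin, `t` points at `(1,0)` and `t` points at `(0,1)`) has
strictly positive second coordinate, hence lies outside the segment from `(0,0)` to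
`(1,0)`, which could be exactly the convex hull of the honest inputs. -/
theorem geometric_median_violates_convex_validity (t : ℕ) (ht : 3 ≤ t)
    (μ : EuclideanSpace ℝ (Fin 2))
    (hmin : ∀ y : EuclideanSpace ℝ (Fin 2),
      ((t : ℝ) + 1) * ‖μ - pt 0 0‖ + (t : ℝ) * ‖μ - pt 1 0‖ + (t : ℝ) * ‖μ - pt 0 1‖ ≤
        ((t : ℝ) + 1) * ‖y - pt 0 0‖ + (t : ℝ) * ‖y - pt 1 0‖ + (t : ℝ) * ‖y - pt 0 1‖) :
    μ ∉ segment ℝ (pt 0 0) (pt 1 0) ∧ 0 < μ 1 := by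
  have ht' : (3:ℝ) ≤ (t:ℝ) := by exact_mod_cast ht
  have key : 0 < μ 1 := by
    by_contra h
    push_neg at h
    -- lower bound 2t on the objective
    have h10 : (1:ℝ) ≤ ‖μ - pt 0 0‖ + ‖μ - pt 1 0‖ := by
      have e : (μ - pt 0 0) - (μ - pt 1 0) = pt 1 0 := by
        rw [sub_sub_sub_cancel_left, pt_sub]; norm_num
      have := norm_sub_le (μ - pt 0 0) (μ - pt 1 0)
      rw [e, norm_pt] at this
      simpa using this
    have h01 : (1:ℝ) ≤ ‖μ - pt 0 1‖ := by
      have hco : (μ - pt 0 1) 1 = μ 1 - 1 := by simp [pt]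
      have habs := coord_abs_le_norm (μ - pt 0 1) 1
      rw [hco] at habs
      have : 1 - μ 1 ≤ |μ 1 - 1| := by rw [abs_sub_comm]; exact le_abs_self _
      linarith
    have hnn : (0:ℝ) ≤ ‖μ - pt 0 0‖ := norm_nonneg _
    have lower : 2*(t:ℝ) ≤ ((t : ℝ) + 1) * ‖μ - pt 0 0‖ + (t : ℝ) * ‖μ - pt 1 0‖ +
        (t : ℝ) * ‖μ - pt 0 1‖ := by nlinarith
    -- upper bound via candidate point (1/20, 1/20)
    have hp := hmin (pt (1/20) (1/20))
    have e1 : ‖pt (1/20) (1/20) - pt 0 0‖ = Real.sqrt (1/200) := by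
      rw [pt_sub, norm_pt]; norm_num
    have e2 : ‖pt (1/20) (1/20) - pt 1 0‖ = Real.sqrt (181/200) := by
      rw [pt_sub, norm_pt]; norm_num
    have e3 : ‖pt (1/20) (1/20) - pt 0 1‖ = Real.sqrt (181/200) := by
      rw [pt_sub, norm_pt]; norm_num
    rw [e1, e2, e3] at hp
    have s1 : Real.sqrt (1/200) < 71/1000 := by
      rw [show (71:ℝ)/1000 = Real.sqrt ((71/1000)^2) by rw [Real.sqrt_sq]; norm_num]
      apply Real.sqrt_lt_sqrt <;> norm_num
    have s2 : Real.sqrt (181/200) < 952/1000 := by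
      rw [show (952:ℝ)/1000 = Real.sqrt ((952/1000)^2) by rw [Real.sqrt_sq]; norm_num]
      apply Real.sqrt_lt_sqrt <;> norm_num
    nlinarith
  refine ⟨?_, key⟩
  rintro ⟨a, b, ha, hb, hab, heq⟩
  have : μ 1 = 0 := by
    rw [← heq]; simp [pt]
  linarith
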